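/- Let G_z be a positive definite Hermitian M×M complex matrix, let W⁰ = [W_s, W_z⁰] ∈ ℂ^{M×M} be invertible with W_s ∈ ℂ^{M×K} its first K columns, and define U_z = ((W⁰)^H G_z)^{−1} E_z ∈ ℂ^{M×(M−K)}. Then a matrix W_z ∈ ℂ^{M×(M−K)} satisfies W_s^H G_z W_z = 0 (the K×(M−K) zero matrix) if and only if there exists B ∈ ℂ^{(M−K)×(M−K)} such that W_z = U_z B. -/

import Mathlib

/-!
M×M complex matrices are encoded as matrices indexed by `Fin K ⊕ Fin L`, where `M = K + L`;
the first `K` columns (`Sum.inl`) of `W⁰` form `W_s`.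

With `A = (W⁰)ᴴ G_z`, which is invertible, `W_sᴴ G_z W_z` is the top `K × L` block of `A W_z`.
That block vanishes iff `A W_z = E_z B`, with `B` the bottom block, i.e. iff `W_z = A⁻¹ E_z B`.
-/

open Matrix
open scoped ComplexOrder

/-- `E_z = [e_{K+1}, …, e_M]`. -/
def Ez (K L : ℕ) : Matrix (Fin K ⊕ Fin L) (Fin L) ℂ :=
  Matrix.of fun i j => if i = Sum.inr j then 1 else 0

namespace Matrix

variable {R l m₁ m₂ n : Type*}

theorem exists_eq_fromRows_zero_one_mul_iff [Semiring R] [Fintype m₂] [DecidableEq m₂]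
    (X : Matrix (m₁ ⊕ m₂) n R) :
    (∃ B : Matrix m₂ n R, X = fromRows (0 : Matrix m₁ m₂ R) 1 * B) ↔ X.toRows₁ = 0 := by
  simp only [fromRows_mul, Matrix.zero_mul, Matrix.one_mul]
  constructor
  · rintro ⟨B, rfl⟩
    exact toRows₁_fromRows 0 B
  · intro h
    exact ⟨X.toRows₂, by rw [← h, fromRows_toRows]⟩

theorem conjTranspose_submatrix_id_inl_mul [Semiring R] [StarRing R] [Fintype l]
    (W : Matrix l (m₁ ⊕ m₂) R) (X : Matrix l n R) :
    (W.submatrix id Sum.inl)ᴴ * X = (Wᴴ * X).toRows₁ :=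
  rfl

theorem eq_nonsing_inv_mul_iff [CommRing R] [Fintype m₁] [DecidableEq m₁]
    {A : Matrix m₁ m₁ R} (hA : IsUnit A) (Y Z : Matrix m₁ n R) :
    Y = A⁻¹ * Z ↔ A * Y = Z := by
  have := hA.invertible
  rw [eq_comm, inv_mul_eq_iff_eq_mul_of_invertible, eq_comm]

end Matrix

theorem Ez_eq_fromRows (K L : ℕ) : Ez K L = fromRows 0 1 := by
  ext (i | i) j <;> simp [Ez, one_apply]

theorem orth_iff_factor_through_Uz_general (K L : ℕ)
    (Gz : Matrix (Fin K ⊕ Fin L) (Fin K ⊕ Fin L) ℂ) (hGz : Gz.PosDef)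
    (W0 : Matrix (Fin K ⊕ Fin L) (Fin K ⊕ Fin L) ℂ) (hW0 : IsUnit W0.det)
    (Ws : Matrix (Fin K ⊕ Fin L) (Fin K) ℂ) (hWs : Ws = W0.submatrix id Sum.inl)
    (Uz : Matrix (Fin K ⊕ Fin L) (Fin L) ℂ) (hUz : Uz = (W0ᴴ * Gz)⁻¹ * Ez K L) :
    ∀ Wz : Matrix (Fin K ⊕ Fin L) (Fin L) ℂ,
      Wsᴴ * Gz * Wz = 0 ↔ ∃ B : Matrix (Fin L) (Fin L) ℂ, Wz = Uz * B := by
  intro Wz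
  have hW0H : IsUnit W0ᴴ := (isUnit_iff_isUnit_det _).mpr (by simpa using hW0.star)
  have hA : IsUnit (W0ᴴ * Gz) := hW0H.mul hGz.isUnit
  rw [hWs, hUz, Matrix.mul_assoc, conjTranspose_submatrix_id_inl_mul, ← Matrix.mul_assoc,
    ← exists_eq_fromRows_zero_one_mul_iff, ← Ez_eq_fromRows]
  simp only [Matrix.mul_assoc, eq_nonsing_inv_mul_iff hA]

/-- With `U_z = ((W⁰)ᴴ G_z)⁻¹ E_z`, a matrix `W_z` satisfies `W_sᴴ G_z W_z = 0`
iff `W_z = U_z B` for some `B`. -/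
theorem orth_iff_factor_through_Uz (K L : ℕ) (hK : 1 ≤ K) (hL : 1 ≤ L)
    (Gz : Matrix (Fin K ⊕ Fin L) (Fin K ⊕ Fin L) ℂ) (hGz : Gz.PosDef)
    (W0 : Matrix (Fin K ⊕ Fin L) (Fin K ⊕ Fin L) ℂ) (hW0 : IsUnit W0.det)
    (Ws : Matrix (Fin K ⊕ Fin L) (Fin K) ℂ) (hWs : Ws = W0.submatrix id Sum.inl)
    (Uz : Matrix (Fin K ⊕ Fin L) (Fin L) ℂ) (hUz : Uz = (W0ᴴ * Gz)⁻¹ * Ez K L) :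
    ∀ Wz : Matrix (Fin K ⊕ Fin L) (Fin L) ℂ,
      Wsᴴ * Gz * Wz = 0 ↔ ∃ B : Matrix (Fin L) (Fin L) ℂ, Wz = Uz * B :=
  orth_iff_factor_through_Uz_general K L Gz hGz W0 hW0 Ws hWs Uz hUz
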